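/- Let x_1^n be a string over {1,...,D}, let s ≥ L(x_1^n) where L denotes the depth, and define P(x_1^m, •) := Σ_{k=s+1}^{m−1} P(x_1^m, k) for m ≥ 1. Then P(x_1^m, •) = 0 for m < s+2, the recursion P(x_1^{m+1}, •) = [P(x_1^m, •) + q_m·P(x_1^m, s)]·B(x_{m+1}|x_1^m, s) holds for all m with s+1 ≤ m ≤ n−1, and consequently P(x_1^n) = Σ_{k=−1}^{s} P(x_1^n, k) + P(x_1^n, •). -/

import Mathlib

open Filter MeasureTheory
open scoped Topology

/-
A context of length `k` greater than the depth of `x_1^m` that ends at position `m` occurs in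
`x_1^m` only there. Both counts in the adaptive predictor of order `k` then vanish, so
`B(· | x_1^m, k) = B(· | x_1^m, k - 1)`, and every predictor of order above `s ≥ L(x_1^n)` agrees
with the one of order `s`. Pulling this common factor out of the recursion for `P(x_1^{m+1}, k)`
and summing over `k > s`, the terms `p_m P(x_1^m, k)` and `q_m P(x_1^m, k - 1)` recombine into
`P(x_1^m, •) + q_m P(x_1^m, s)` because `p_m + q_m = 1`.
-/

/-- Number of occurrences `c(w|z)` of `w` as a substring of `z`. -/
def cnt {D : ℕ} (w z : List (Fin D)) : ℕ :=
  ((List.range (z.length - w.length + 1)).filter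
    (fun i => (z.drop i).take w.length = w)).length

/-- Count `c(w | z_1^{m-1})` of `w` in the string `z` with its last symbol removed,
with the convention that counting in a block of length `-1` (i.e. when `z` itself is
empty) gives `0`. -/
def cntPred {D : ℕ} (w z : List (Fin D)) : ℕ :=
  if z = [] then 0 else cnt w z.dropLast

/-- The prefix `x_1^n` of the one-sided sequence `x` (0-indexed: `x i = x_{i+1}`). -/
def pref {D : ℕ} (x : ℕ → Fin D) (n : ℕ) : List (Fin D) :=
  (List.range n).map x

/-- Adaptive Markov predictor: the natural-number index corresponds to the Markov
order shifted by one, so `Bpred D xs a (k+1) = B(a | xs, k)` and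
`Bpred D xs a 0 = B(a | xs, -1) = 1/D`, where
`B(x_{n+1}|x_1^n, k) = (c(x_{n+1-k}^{n+1}|x_1^n) + B(x_{n+1}|x_1^n, k-1)) /
(c(x_{n+1-k}^{n}|x_1^{n-1}) + 1)`.  Counts of substrings whose indices fall outside
the string are taken to be zero. -/
noncomputable def Bpred (D : ℕ) (xs : List (Fin D)) (a : Fin D) : ℕ → ℝ
  | 0 => 1 / D
  | k + 1 =>
    if k ≤ xs.length then
      ((cnt (xs.drop (xs.length - k) ++ [a]) xs : ℝ) + Bpred D xs a k) /
      ((cntPred (xs.drop (xs.length - k)) xs : ℝ) + 1)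
    else Bpred D xs a k

/-- Partial switch distribution `P(x_1^n, k)` with Markov order `k : ℤ`:
`P(x_1,-1) = p_0 B(x_1|-1)`, `P(x_1,0) = (1-p_0) B(x_1|0)`, `P(x_1^n,k) = 0`
for `k < -1` or `k ≥ n`, and
`P(x_1^{n+1},k) = [p_n P(x_1^n,k) + (1-p_n) P(x_1^n,k-1)] B(x_{n+1}|x_1^n,k)`. -/
noncomputable def Ppart (D : ℕ) (p : ℕ → ℝ) (x : ℕ → Fin D) : ℕ → ℤ → ℝ
  | 0, _ => 0
  | 1, k =>
    if k = -1 then p 0 * Bpred D [] (x 0) 0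
    else if k = 0 then (1 - p 0) * Bpred D [] (x 0) 1
    else 0
  | n + 2, k =>
    if -1 ≤ k ∧ k ≤ (n : ℤ) + 1 then
      (p (n + 1) * Ppart D p x (n + 1) k +
        (1 - p (n + 1)) * Ppart D p x (n + 1) (k - 1)) *
        Bpred D (pref x (n + 1)) (x (n + 1)) (k + 1).toNat
    else 0

/-- The plain switch distribution `P(x_1^n) = Σ_{k=-1}^{n-1} P(x_1^n, k)`. -/
noncomputable def swP (D : ℕ) (p : ℕ → ℝ) (x : ℕ → Fin D) (n : ℕ) : ℝ :=
  ∑ kk ∈ Finset.range (n + 1), Ppart D p x n ((kk : ℤ) - 1)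

/-- The depth `L(z)`: maximal length of a substring occurring at least twice in `z`
(`0` if there is none). -/
noncomputable def depth {D : ℕ} (z : List (Fin D)) : ℕ :=
  sSup {k | ∃ w : List (Fin D), w.length = k ∧ 2 ≤ cnt w z}

section Occurrences

variable {D : ℕ}

def occurrences (w z : List (Fin D)) : Finset ℕ :=
  (Finset.range (z.length - w.length + 1)).filter (fun i => (z.drop i).take w.length = w)

lemma cnt_eq_card_occurrences (w z : List (Fin D)) : cnt w z = (occurrences w z).card := rfl

lemma mem_occurrences {w z : List (Fin D)} {i : ℕ} :
    i ∈ occurrences w z ↔ i + w.length ≤ z.length ∧ (z.drop i).take w.length = w := by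
  simp only [occurrences, Finset.mem_filter, Finset.mem_range]
  constructor
  · rintro ⟨hi, hocc⟩
    have hlen := congrArg List.length hocc
    simp only [List.length_take, List.length_drop] at hlen
    exact ⟨by omega, hocc⟩
  · rintro ⟨hi, hocc⟩
    exact ⟨by omega, hocc⟩

lemma occurrences_subset_of_prefix (w : List (Fin D)) {z z' : List (Fin D)} (h : z <+: z') :
    occurrences w z ⊆ occurrences w z' := by
  intro i hi
  rw [mem_occurrences] at hi ⊢
  obtain ⟨t, rfl⟩ := h
  refine ⟨by simp only [List.length_append]; omega, ?_⟩
  rw [List.drop_append_of_le_length (by omega),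
    List.take_append_of_le_length (by simp only [List.length_drop]; omega)]
  exact hi.2

lemma mem_occurrences_of_append {w u z : List (Fin D)} {i : ℕ}
    (h : i ∈ occurrences (w ++ u) z) : i ∈ occurrences w z := by
  rw [mem_occurrences] at h ⊢
  obtain ⟨hi, hocc⟩ := h
  rw [List.length_append] at hi hocc
  refine ⟨by omega, ?_⟩
  have := congrArg (List.take w.length) hocc
  rwa [List.take_take, Nat.min_eq_left (by omega), List.take_left' rfl] at this

lemma drop_mem_occurrences (z : List (Fin D)) {k : ℕ} (hk : k ≤ z.length) :
    z.length - k ∈ occurrences (z.drop (z.length - k)) z := by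
  rw [mem_occurrences, List.take_length, List.length_drop]
  exact ⟨by omega, rfl⟩

end Occurrences

section Depth

variable {D : ℕ} {w z z' : List (Fin D)}

lemma length_le_of_two_le_cnt (h : 2 ≤ cnt w z) : w.length ≤ z.length := by
  obtain ⟨i, hi⟩ := (occurrences w z).card_pos.mp (by rw [← cnt_eq_card_occurrences]; omega)
  exact (Nat.le_add_left _ i).trans (mem_occurrences.mp hi).1

lemma length_le_depth_of_two_le_cnt (h : 2 ≤ cnt w z) : w.length ≤ depth z :=
  le_csSup ⟨z.length, fun _ ⟨_, hu, h2⟩ => hu ▸ length_le_of_two_le_cnt h2⟩ ⟨w, rfl, h⟩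

lemma depth_le_of_prefix (h : z <+: z') : depth z ≤ depth z' :=
  csSup_le' fun _ ⟨w, hw, h2⟩ => hw ▸ length_le_depth_of_two_le_cnt
    (h2.trans (Finset.card_le_card (occurrences_subset_of_prefix w h)))

lemma eq_of_mem_occurrences_of_depth_lt (hw : depth z < w.length) {i j : ℕ}
    (hi : i ∈ occurrences w z) (hj : j ∈ occurrences w z) : i = j := by
  by_contra hij
  have h2 : 2 ≤ cnt w z := Finset.one_lt_card.mpr ⟨i, hi, j, hj, hij⟩
  exact absurd (length_le_depth_of_two_le_cnt h2) (by omega)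

lemma pref_prefix (x : ℕ → Fin D) {m n : ℕ} (h : m ≤ n) : pref x m <+: pref x n := by
  have htake : pref x m = (pref x n).take m := by
    simp [pref, ← List.map_take, List.take_range, Nat.min_eq_left h]
  exact htake ▸ List.take_prefix m _

end Depth

section Predictor

variable {D : ℕ} {xs : List (Fin D)} (a : Fin D)

lemma Bpred_succ_of_depth_lt {k : ℕ} (hk : depth xs < k) :
    Bpred D xs a (k + 1) = Bpred D xs a k := by
  rw [Bpred]
  split_ifs with hklen
  · set w := xs.drop (xs.length - k)
    have hwlen : w.length = k := by simp only [w, List.length_drop]; omega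
    have hsuffix : xs.length - k ∈ occurrences w xs := drop_mem_occurrences xs hklen
    -- `w` occurs only as a suffix, so it is never followed by a symbol nor inside `xs.dropLast`.
    have hext : cnt (w ++ [a]) xs = 0 := by
      rw [cnt_eq_card_occurrences]
      refine Finset.card_eq_zero.mpr (Finset.eq_empty_of_forall_notMem fun i hi => ?_)
      have hi_le := (mem_occurrences.mp hi).1
      have hi_eq := eq_of_mem_occurrences_of_depth_lt (by omega)
        (mem_occurrences_of_append hi) hsuffix
      simp only [List.length_append, List.length_singleton] at hi_le
      omega
    have hctx : cntPred w xs = 0 := by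
      unfold cntPred
      split_ifs
      · rfl
      rw [cnt_eq_card_occurrences]
      refine Finset.card_eq_zero.mpr (Finset.eq_empty_of_forall_notMem fun i hi => ?_)
      have hi_le := (mem_occurrences.mp hi).1
      have hi_eq := eq_of_mem_occurrences_of_depth_lt (by omega)
        (occurrences_subset_of_prefix w xs.dropLast_prefix hi) hsuffix
      simp only [List.length_dropLast] at hi_le
      omega
    rw [hext, hctx]
    simp
  · rfl

lemma Bpred_eq_of_depth_le {s k : ℕ} (hs : depth xs ≤ s) (hk : s + 1 ≤ k) :
    Bpred D xs a k = Bpred D xs a (s + 1) := by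
  induction k, hk using Nat.le_induction with
  | base => rfl
  | succ k hk ih => rw [Bpred_succ_of_depth_lt a (by omega), ih]

end Predictor

lemma sum_Ico_succ_sub_one {M : Type*} [AddCommMonoid M] (f : ℤ → M) (a b : ℕ) :
    ∑ k ∈ Finset.Ico (a + 1) (b + 1), f ((k : ℤ) - 1) = ∑ k ∈ Finset.Ico a b, f k := by
  rw [← Finset.sum_Ico_add' (fun k : ℕ => f ((k : ℤ) - 1))]
  simp

section Switch

variable (D : ℕ) (p : ℕ → ℝ) (x : ℕ → Fin D)

lemma Ppart_eq_zero_of_le {m : ℕ} {k : ℤ} (h : (m : ℤ) ≤ k) : Ppart D p x m k = 0 := by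
  match m with
  | 0 => rfl
  | 1 => rw [Ppart, if_neg (by omega), if_neg (by omega)]
  | m + 2 => rw [Ppart, if_neg (by push_cast at h; omega)]

lemma Ppart_succ {m k : ℕ} (hm : 1 ≤ m) (hk : k ≤ m) :
    Ppart D p x (m + 1) k =
      (p m * Ppart D p x m k + (1 - p m) * Ppart D p x m ((k : ℤ) - 1)) *
        Bpred D (pref x m) (x m) (k + 1) := by
  obtain ⟨m, rfl⟩ : ∃ m', m = m' + 1 := ⟨m - 1, by omega⟩
  rw [Ppart, if_pos (by omega)]
  congr 2

/-- The paper's `P(x_1^m, •)`: the mass on Markov orders above `s`. -/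
noncomputable def Ptail (s m : ℕ) : ℝ :=
  ∑ k ∈ Finset.Ico (s + 1) m, Ppart D p x m k

variable {D p x}

lemma Ptail_succ {s m : ℕ} (hs : depth (pref x m) ≤ s) (hm : s + 1 ≤ m) :
    Ptail D p x s (m + 1) =
      (Ptail D p x s m + (1 - p m) * Ppart D p x m s) * Bpred D (pref x m) (x m) (s + 1) := by
  have hstep : ∀ k ∈ Finset.Ico (s + 1) (m + 1), Ppart D p x (m + 1) k =
      (p m * Ppart D p x m k + (1 - p m) * Ppart D p x m ((k : ℤ) - 1)) *
        Bpred D (pref x m) (x m) (s + 1) := by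
    intro k hk
    rw [Finset.mem_Ico] at hk
    rw [Ppart_succ D p x (by omega) (by omega), Bpred_eq_of_depth_le _ hs (by omega)]
  have hsame : ∑ k ∈ Finset.Ico (s + 1) (m + 1), Ppart D p x m k = Ptail D p x s m := by
    rw [Finset.sum_Ico_succ_top (by omega), Ppart_eq_zero_of_le D p x le_rfl, add_zero, Ptail]
  have hshift : ∑ k ∈ Finset.Ico (s + 1) (m + 1), Ppart D p x m ((k : ℤ) - 1) =
      Ppart D p x m s + Ptail D p x s m := by
    rw [sum_Ico_succ_sub_one, Finset.sum_eq_sum_Ico_succ_bot (by omega), Ptail]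
  calc Ptail D p x s (m + 1)
      = ∑ k ∈ Finset.Ico (s + 1) (m + 1),
          (p m * Ppart D p x m k + (1 - p m) * Ppart D p x m ((k : ℤ) - 1)) *
            Bpred D (pref x m) (x m) (s + 1) := Finset.sum_congr rfl hstep
    _ = (p m * Ptail D p x s m + (1 - p m) * (Ppart D p x m s + Ptail D p x s m)) *
          Bpred D (pref x m) (x m) (s + 1) := by
        rw [← Finset.sum_mul, Finset.sum_add_distrib, ← Finset.mul_sum, ← Finset.mul_sum,
          hsame, hshift]
    _ = _ := by ring

lemma swP_eq_sum_add_Ptail (n s : ℕ) :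
    swP D p x n = ∑ kk ∈ Finset.range (s + 2), Ppart D p x n ((kk : ℤ) - 1) + Ptail D p x s n := by
  rcases le_or_gt (s + 1) n with h | h
  · rw [swP, ← Finset.sum_range_add_sum_Ico _ (by omega : s + 2 ≤ n + 1), Ptail,
      ← sum_Ico_succ_sub_one]
  · rw [Ptail, Finset.Ico_eq_empty_of_le (by omega), Finset.sum_empty, add_zero, swP]
    exact Finset.sum_subset (Finset.range_subset_range.mpr (by omega)) fun kk _ hkk =>
      Ppart_eq_zero_of_le D p x (by simp only [Finset.mem_range] at hkk; omega)

end Switch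

theorem truncated_switch_recursion_general
    (D : ℕ) (p : ℕ → ℝ)
    (n : ℕ) (x : ℕ → Fin D) (s : ℕ) (hs : depth (pref x n) ≤ s) :
    (∀ m : ℕ, m < s + 2 → (∑ k ∈ Finset.Ico (s + 1) m, Ppart D p x m (k : ℤ)) = 0) ∧
    (∀ m : ℕ, s + 1 ≤ m → m + 1 ≤ n →
      (∑ k ∈ Finset.Ico (s + 1) (m + 1), Ppart D p x (m + 1) (k : ℤ)) =
        ((∑ k ∈ Finset.Ico (s + 1) m, Ppart D p x m (k : ℤ)) +
            (1 - p m) * Ppart D p x m (s : ℤ)) *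
          Bpred D (pref x m) (x m) (s + 1)) ∧
    swP D p x n =
      (∑ kk ∈ Finset.range (s + 2), Ppart D p x n ((kk : ℤ) - 1)) +
        ∑ k ∈ Finset.Ico (s + 1) n, Ppart D p x n (k : ℤ) := by
  refine ⟨fun m hm => ?_, fun m hm hmn => ?_, swP_eq_sum_add_Ptail n s⟩
  · rw [Finset.Ico_eq_empty_of_le (by omega), Finset.sum_empty]
  · exact Ptail_succ ((depth_le_of_prefix (pref_prefix x (by omega))).trans hs) hm

/-- Let `x_1^n` be a string over `{1,...,D}`, `s ≥ L(x_1^n)`, and define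
`P(x_1^m, •) := Σ_{k=s+1}^{m−1} P(x_1^m, k)`. Then `P(x_1^m, •) = 0` for `m < s+2`,
the recursion `P(x_1^{m+1}, •) = [P(x_1^m, •) + q_m·P(x_1^m, s)]·B(x_{m+1}|x_1^m, s)`
holds for `s+1 ≤ m ≤ n−1`, and consequently
`P(x_1^n) = Σ_{k=−1}^{s} P(x_1^n, k) + P(x_1^n, •)`. -/
theorem truncated_switch_recursion
    (D : ℕ) (hD : 2 ≤ D) (p : ℕ → ℝ) (hp : ∀ n, p n ∈ Set.Ioo (0 : ℝ) 1)
    (hprod : ∃ L, 0 < L ∧ Tendsto (fun N : ℕ => ∏ i ∈ Finset.range N, p i) atTop (𝓝 L))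
    (n : ℕ) (x : ℕ → Fin D) (s : ℕ) (hs : depth (pref x n) ≤ s) :
    (∀ m : ℕ, m < s + 2 → (∑ k ∈ Finset.Ico (s + 1) m, Ppart D p x m (k : ℤ)) = 0) ∧
    (∀ m : ℕ, s + 1 ≤ m → m + 1 ≤ n →
      (∑ k ∈ Finset.Ico (s + 1) (m + 1), Ppart D p x (m + 1) (k : ℤ)) =
        ((∑ k ∈ Finset.Ico (s + 1) m, Ppart D p x m (k : ℤ)) +
            (1 - p m) * Ppart D p x m (s : ℤ)) *
          Bpred D (pref x m) (x m) (s + 1)) ∧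
    swP D p x n =
      (∑ kk ∈ Finset.range (s + 2), Ppart D p x n ((kk : ℤ) - 1)) +
        ∑ k ∈ Finset.Ico (s + 1) n, Ppart D p x n (k : ℤ) :=
  truncated_switch_recursion_general D p n x s hs
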